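/- Consider the 2-round online instance with a single good per round and three buyers: buyer 1 is active only in round 1 with budget 1 and valuation 1; buyer 2 is active in rounds 1 and 2 with budget 1+√2 and valuation 1+√2; buyer 3 is active only in round 2 with budget 1+√2 and valuation 1+√2. Then: (A) in the instance containing only buyers 1 and 2, every feasible solution whose round-1 allocation to buyer 2 satisfies x^1_{21} ≥ 1/2 has total revenue at most 3/2+√2, whereas there exists a feasible solution with total revenue 2+√2; and (B) in the instance containing all three buyers, every feasible solution whose round-1 allocation to buyer 2 satisfies x^1_{21} < 1/2 has total revenue at most 2+(3/2)·√2, whereas there exists a feasible solution with total revenue 2·(1+√2). In both cases the achieved-to-optimal ratio is at most (2+√2)/4; hence no online algorithm is better than (2+√2)/4 ≈ 0.85 competitive. -/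
import Mathlib


open Finset

/-- Budgets of the three buyers in the adversarial online instance. -/
noncomputable def advBudget : Fin 3 → ℝ := ![1, 1 + Real.sqrt 2, 1 + Real.sqrt 2]

/-- Valuations of the three buyers for the single good. -/
noncomputable def advVal : Fin 3 → ℝ := ![1, 1 + Real.sqrt 2, 1 + Real.sqrt 2]

/-- Activity of the buyers: buyer 1 is active only in round 1, buyer 2 in both
rounds, buyer 3 only in round 2 (0-indexed). -/
def advActive : Fin 3 → Fin 2 → Prop := ![![True, False], ![True, True], ![False, True]]

/-- A feasible solution of the 2-round single-good instance, restricted to the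
buyers in `present`: nonnegative allocations `x i t` and payments `o i t`, supply
at most one unit per round, individual rationality, budget feasibility, and no
allocation/payment for absent or inactive buyers. -/
def AdvFeasible (present : Fin 3 → Prop) (x o : Fin 3 → Fin 2 → ℝ) : Prop :=
  (∀ i t, 0 ≤ x i t) ∧ (∀ i t, 0 ≤ o i t) ∧
  (∀ t, ∑ i, x i t ≤ 1) ∧
  (∀ i t, o i t ≤ advVal i * x i t) ∧
  (∀ i, ∑ t, o i t ≤ advBudget i) ∧
  (∀ i t, ¬ (present i ∧ advActive i t) → x i t = 0 ∧ o i t = 0)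

/-- The adversarial 2-round instance: (A) if only buyers 1 and 2 are present, any
feasible solution allocating at least half the round-1 good to buyer 2 has
revenue at most `3/2 + √2`, whereas revenue `2 + √2` is feasible; (B) if all
three buyers are present, any feasible solution allocating less than half the
round-1 good to buyer 2 has revenue at most `2 + (3/2)√2`, whereas revenue
`2(1 + √2)` is feasible.  In both cases the ratio is `(2 + √2)/4`, so no online
algorithm is better than `(2 + √2)/4`-competitive. -/
theorem online_upper_bound :
    (∀ x o : Fin 3 → Fin 2 → ℝ, AdvFeasible (fun i => i ≠ 2) x o →
      1 / 2 ≤ x 1 0 → ∑ i, ∑ t, o i t ≤ 3 / 2 + Real.sqrt 2) ∧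
    (∃ x o : Fin 3 → Fin 2 → ℝ, AdvFeasible (fun i => i ≠ 2) x o ∧
      ∑ i, ∑ t, o i t = 2 + Real.sqrt 2) ∧
    (∀ x o : Fin 3 → Fin 2 → ℝ, AdvFeasible (fun _ => True) x o →
      x 1 0 < 1 / 2 → ∑ i, ∑ t, o i t ≤ 2 + (3 / 2) * Real.sqrt 2) ∧
    (∃ x o : Fin 3 → Fin 2 → ℝ, AdvFeasible (fun _ => True) x o ∧
      ∑ i, ∑ t, o i t = 2 * (1 + Real.sqrt 2)) ∧
    (3 / 2 + Real.sqrt 2) / (2 + Real.sqrt 2) = (2 + Real.sqrt 2) / 4 ∧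
    (2 + (3 / 2) * Real.sqrt 2) / (2 * (1 + Real.sqrt 2)) = (2 + Real.sqrt 2) / 4 := by
  have hs0 : (0:ℝ) ≤ Real.sqrt 2 := Real.sqrt_nonneg 2
  have hs2 : Real.sqrt 2 * Real.sqrt 2 = 2 := Real.mul_self_sqrt (by norm_num)
  have hs1 : (1:ℝ) ≤ Real.sqrt 2 := by nlinarith
  refine ⟨?_, ?_, ?_, ?_, ?_, ?_⟩
  · -- part A upper bound
    rintro x o ⟨hx, ho, hsup, hir, hbud, hz⟩ hhalf
    have hz01 : o 0 1 = 0 := (hz 0 1 (by simp [advActive])).2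
    have hz20 : x 2 0 = 0 := (hz 2 0 (by simp)).1
    have hz2o : ∀ t, o 2 t = 0 := fun t => (hz 2 t (by simp)).2
    have h00 : o 0 0 ≤ x 0 0 := by
      have := hir 0 0; simpa [advVal] using this
    have hsup0 := hsup 0
    simp only [Fin.sum_univ_three] at hsup0
    have hbud1 := hbud 1
    simp only [Fin.sum_univ_two, advBudget] at hbud1
    simp only [Fin.sum_univ_three, Fin.sum_univ_two, hz01, hz2o]
    have hx00 : x 0 0 ≤ 1 / 2 := by linarith [hz20]
    simp [advBudget] at hbud1
    linarith
  · -- part A witness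
    refine ⟨![![1,0],![0,1],![0,0]], ![![1,0],![0,1 + Real.sqrt 2],![0,0]], ?_, ?_⟩
    · refine ⟨?_, ?_, ?_, ?_, ?_, ?_⟩
      · intro i t; fin_cases i <;> fin_cases t <;> simp [Matrix.vecHead, Matrix.vecTail] <;> linarith
      · intro i t; fin_cases i <;> fin_cases t <;> simp [Matrix.vecHead, Matrix.vecTail] <;> linarith
      · intro t; fin_cases t <;> simp [Fin.sum_univ_three, Matrix.vecHead, Matrix.vecTail]
      · intro i t; fin_cases i <;> fin_cases t <;> simp [advVal, Matrix.vecHead, Matrix.vecTail] <;> nlinarith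
      · intro i; fin_cases i <;> simp [Fin.sum_univ_two, advBudget, Matrix.vecHead, Matrix.vecTail] <;> linarith
      · intro i t; fin_cases i <;> fin_cases t <;> simp [advActive, Matrix.vecHead, Matrix.vecTail]
    · simp [Fin.sum_univ_three, Fin.sum_univ_two, Matrix.vecHead, Matrix.vecTail]; ring
  · -- part B upper bound
    rintro x o ⟨hx, ho, hsup, hir, hbud, hz⟩ hhalf
    have hz01 : o 0 1 = 0 := (hz 0 1 (by simp [advActive])).2
    have hz20 : x 2 0 = 0 := (hz 2 0 (by simp [advActive])).1
    have hzo20 : o 2 0 = 0 := (hz 2 0 (by simp [advActive])).2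
    have h00 : o 0 0 ≤ x 0 0 := by
      have := hir 0 0; simpa [advVal] using this
    have h10 : o 1 0 ≤ (1 + Real.sqrt 2) * x 1 0 := by
      have := hir 1 0; simpa [advVal] using this
    have h11 : o 1 1 ≤ (1 + Real.sqrt 2) * x 1 1 := by
      have := hir 1 1; simpa [advVal] using this
    have h21 : o 2 1 ≤ (1 + Real.sqrt 2) * x 2 1 := by
      have := hir 2 1; simpa [advVal] using this
    have hsup0 := hsup 0
    have hsup1 := hsup 1
    simp only [Fin.sum_univ_three] at hsup0 hsup1
    simp only [Fin.sum_univ_three, Fin.sum_univ_two, hz01, hzo20]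
    have hx10 : 0 ≤ x 1 0 := hx 1 0
    have hx11 : 0 ≤ x 1 1 := hx 1 1
    have hx21 : 0 ≤ x 2 1 := hx 2 1
    nlinarith [hx 0 1, ho 0 1, hz20]
  · -- part B witness
    refine ⟨![![0,0],![1,0],![0,1]], ![![0,0],![1 + Real.sqrt 2,0],![0,1 + Real.sqrt 2]], ?_, ?_⟩
    · refine ⟨?_, ?_, ?_, ?_, ?_, ?_⟩
      · intro i t; fin_cases i <;> fin_cases t <;> simp [Matrix.vecHead, Matrix.vecTail] <;> linarith
      · intro i t; fin_cases i <;> fin_cases t <;> simp [Matrix.vecHead, Matrix.vecTail] <;> linarith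
      · intro t; fin_cases t <;> simp [Fin.sum_univ_three, Matrix.vecHead, Matrix.vecTail]
      · intro i t; fin_cases i <;> fin_cases t <;> simp [advVal, Matrix.vecHead, Matrix.vecTail] <;> nlinarith
      · intro i; fin_cases i <;> simp [Fin.sum_univ_two, advBudget, Matrix.vecHead, Matrix.vecTail] <;> linarith
      · intro i t; fin_cases i <;> fin_cases t <;> simp [advActive, Matrix.vecHead, Matrix.vecTail]
    · simp [Fin.sum_univ_three, Fin.sum_univ_two, Matrix.vecHead, Matrix.vecTail]; ring
  · -- ratio A
    have h2 : (2:ℝ) + Real.sqrt 2 ≠ 0 := by positivity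
    field_simp
    nlinarith
  · -- ratio B
    have h2 : (2:ℝ) * (1 + Real.sqrt 2) ≠ 0 := by positivity
    field_simp
    nlinarith
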